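/- In the cake instance constructed from segment sets A_1, …, A_n: there exists a connected division with utilitarian welfare at least B = (4/3)·Σ_{i=1}^n |A_i| − n if and only if one can choose n pairwise disjoint segments, exactly one from each A_i. (Correctness of the reduction from the Maximum Cover by Segments Packing problem, used to prove that maximizing utilitarian welfare with connected pieces is strongly NP-hard.) -/

import Mathlib

open MeasureTheory Set
open scoped ENNReal

/-- Density of a uniform block: total value `c` spread uniformly over the
interval `(a, b)`. -/
noncomputable def unif (a b c : ℝ) : ℝ → ℝ≥0∞ :=
  (Ioo a b).indicator fun _ => ENNReal.ofReal (c / (b - a))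

/-- The players of the instance built from an MCSP instance with segment sets
`A_1, …, A_n` (`|A_i| = L i`): `L i` segment players and `L i - 1` separation
players for each `i`. -/
abbrev MCPlayer (n : ℕ) (L : Fin n → ℕ) : Type :=
  (Σ i : Fin n, Fin (L i)) ⊕ (Σ i : Fin n, Fin (L i - 1))

/-- `Coff n L m i` = the left endpoint `C_i` of the compensation range of the
set `A_i`. -/
noncomputable def Coff (n : ℕ) (L : Fin n → ℕ) (m : ℕ) (i : Fin n) : ℝ :=
  m + 2 * ∑ i' ∈ Finset.univ.filter (· < i), ((L i' : ℝ) - 1)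

/-- The value density function of each player in the reduction (segment players
indexed from 0; index `j` here corresponds to the paper's `p_i^{j+1}`). -/
noncomputable def mcDensity (n m : ℕ) (L : Fin n → ℕ)
    (A : (i : Fin n) → Fin (L i) → ℕ × ℕ) : MCPlayer n L → ℝ → ℝ≥0∞
  | Sum.inl ⟨i, j⟩ => fun t =>
      unif (((A i j).1 : ℝ) - 1) ((A i j).2 : ℝ) (1 / 3) t +
      (if (j : ℕ) = 0 then
        unif (Coff n L m i + 1) (Coff n L m i + 2) (1 / 3) t +
          unif (Coff n L m i + 3) (Coff n L m i + 4) (1 / 3) t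
      else if (j : ℕ) = L i - 1 then
        unif (Coff n L m i + 2 * (L i : ℝ) - 5) (Coff n L m i + 2 * (L i : ℝ) - 4)
          (1 / 3) t +
        unif (Coff n L m i + 2 * (L i : ℝ) - 3) (Coff n L m i + 2 * (L i : ℝ) - 2)
          (1 / 3) t
      else
        unif (Coff n L m i + 2 * ((j : ℕ) : ℝ) - 1) (Coff n L m i + 2 * ((j : ℕ) : ℝ))
          (1 / 3) t +
        unif (Coff n L m i + 2 * ((j : ℕ) : ℝ) + 1)
          (Coff n L m i + 2 * ((j : ℕ) : ℝ) + 2) (1 / 3) t)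
  | Sum.inr ⟨i, j⟩ => fun t =>
      unif (Coff n L m i + 2 * ((j : ℕ) : ℝ)) (Coff n L m i + 2 * ((j : ℕ) : ℝ) + 1) 1 t

/-- The valuation measure of each player in the reduction. -/
noncomputable def mcMeas (n m : ℕ) (L : Fin n → ℕ)
    (A : (i : Fin n) → Fin (L i) → ℕ × ℕ) (p : MCPlayer n L) : Measure ℝ :=
  MeasureTheory.volume.withDensity (mcDensity n m L A p)

/-!
Group `i` of the instance can contribute at most `(4/3)·|A_i| − 1` to the welfare. A segment
player gains beyond its own third only by collecting value from both of its compensation cells,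
or from its segment and a compensation cell; its interval then covers the separation cell lying
in between, and that separation player loses its full unit. Charging these losses against the
gains gives the bound, which is strict unless some segment player of the group holds its whole
segment. Welfare `B` therefore forces a fully covered segment in every group, and these segments
are pairwise disjoint because the pieces are. Conversely, from disjoint chosen segments one plans
a piece for every player (chosen segment, a compensation cell, or the player's own separation
cell); the planned intervals are disjoint, so they extend to a connected division of welfare `B`.
-/

open Function

lemma measurable_unif (a b c : ℝ) : Measurable (unif a b c) :=
  measurable_const.indicator measurableSet_Ioo

lemma withDensity_unif_apply (a b c : ℝ) (S : Set ℝ) :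
    volume.withDensity (unif a b c) S = ENNReal.ofReal (c / (b - a)) * volume (S ∩ Ioo a b) := by
  rw [unif, withDensity_indicator measurableSet_Ioo, withDensity_const, Measure.smul_apply,
    Measure.restrict_apply' measurableSet_Ioo, smul_eq_mul]

lemma volume_inter_Ioo_ne_top (S : Set ℝ) (a b : ℝ) : volume (S ∩ Ioo a b) ≠ ⊤ :=
  measure_ne_top_of_subset inter_subset_right measure_Ioo_lt_top.ne

lemma measureReal_inter_Ioo_le (S : Set ℝ) {a b : ℝ} (h : a ≤ b) :
    volume.real (S ∩ Ioo a b) ≤ b - a :=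
  (measureReal_mono inter_subset_right measure_Ioo_lt_top.ne).trans
    (Real.volume_real_Ioo_of_le h).le

lemma ofReal_mul_measureReal_inter_Ioo (c : ℝ) (S : Set ℝ) (a b : ℝ) :
    ENNReal.ofReal (c * volume.real (S ∩ Ioo a b)) =
      ENNReal.ofReal c * volume (S ∩ Ioo a b) := by
  rw [ENNReal.ofReal_mul' measureReal_nonneg, measureReal_def,
    ENNReal.ofReal_toReal (volume_inter_Ioo_ne_top S a b)]

lemma Set.OrdConnected.Ioo_subset_of_le_measureReal {J : Set ℝ} (hJ : J.OrdConnected) {a b : ℝ}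
    (h : b - a ≤ volume.real (J ∩ Ioo a b)) : Ioo a b ⊆ J := by
  intro z hz
  by_contra hzJ
  have hside : J ∩ Ioo a b ⊆ Ioo a z ∨ J ∩ Ioo a b ⊆ Ioo z b := by
    by_contra! hc
    simp only [not_subset, mem_inter_iff, mem_Ioo, not_and, not_lt] at hc
    obtain ⟨⟨x, ⟨hxJ, hx⟩, hxz⟩, ⟨y, ⟨hyJ, hy⟩, hyz⟩⟩ := hc
    exact hzJ (hJ.out hyJ hxJ ⟨not_lt.1 fun h => (hyz h).not_gt hy.2, hxz hx.1⟩)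
  have hle : ∀ {u v : ℝ}, u ≤ v → J ∩ Ioo a b ⊆ Ioo u v → volume.real (J ∩ Ioo a b) ≤ v - u :=
    fun huv hs =>
      (measureReal_mono hs measure_Ioo_lt_top.ne).trans_eq (Real.volume_real_Ioo_of_le huv)
  rcases hside with hs | hs
  · linarith [hle hz.1.le hs, hz.2]
  · linarith [hle hz.2.le hs, hz.1]

lemma measureReal_inter_eq_zero_of_subset {ι α : Type*} [MeasurableSpace α] {μ : Measure α}
    {J : ι → Set α} (hJ : Pairwise (Disjoint on J)) {p q : ι} (hpq : p ≠ q) {Z : Set α}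
    (hZ : Z ⊆ J q) : μ.real (J p ∩ Z) = 0 := by
  rw [((hJ hpq).mono_right hZ).inter_eq, measureReal_empty]

lemma Pairwise.eq_of_mem_of_disjoint {ι α : Type*} {J : ι → Set α}
    (hJ : Pairwise (Disjoint on J)) {p q : ι} {x : α} (hp : x ∈ J p) (hq : x ∈ J q) : p = q := by
  by_contra h
  exact Set.disjoint_left.1 (hJ h) hp hq

lemma lt_or_lt_of_disjoint_Icc {α : Type*} [LinearOrder α] [LocallyFiniteOrder α]
    {a b a' b' : α} (h : Disjoint (Finset.Icc a b) (Finset.Icc a' b')) (hab : a ≤ b)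
    (hab' : a' ≤ b') : b < a' ∨ b' < a := by
  by_contra! hc
  exact Finset.disjoint_left.1 h (Finset.mem_Icc.2 ⟨le_max_left a a', max_le hab hc.1⟩)
    (Finset.mem_Icc.2 ⟨le_max_right a a', max_le hc.2 hab'⟩)

lemma Monotone.pairwise_disjoint_Ioo_castSucc_succ {N : ℕ} {c : Fin (N + 1) → ℝ}
    (hc : Monotone c) : Pairwise (Disjoint on fun k : Fin N => Ioo (c k.castSucc) (c k.succ)) :=
  fun k k' h => by
    simpa [onFun] using hc.pairwise_disjoint_on_Ioo_succ ((Fin.castSucc_injective N).ne h)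

theorem exists_division_of_pairwise_disjoint {ι : Type*} [Fintype ι] [Nonempty ι]
    (l r : ι → ℝ) (M : ℝ) (hlr : ∀ p, l p < r p) (hl : ∀ p, 0 ≤ l p) (hr : ∀ p, r p ≤ M)
    (hdisj : ∀ p q, p ≠ q → r p ≤ l q ∨ r q ≤ l p) :
    ∃ (c : Fin (Fintype.card ι + 1) → ℝ) (σ : Fin (Fintype.card ι) ≃ ι),
      Monotone c ∧ c 0 = 0 ∧ c (Fin.last _) = M ∧
      ∀ p, Ioo (l p) (r p) ⊆ Ioo (c (σ.symm p).castSucc) (c (σ.symm p).succ) := by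
  have hsep : ∀ p q, l p < l q → r p ≤ l q := fun p q hpq =>
    (hdisj p q (by rintro rfl; exact hpq.false)).resolve_right fun h => by linarith [hlr q]
  let _ : LinearOrder ι := LinearOrder.lift' l fun p q hpq => by
    by_contra hne
    rcases hdisj p q hne with h | h <;> linarith [hlr p, hlr q]
  set N := Fintype.card ι
  let σ : Fin N ≃o ι := Fintype.orderIsoFinOfCardEq ι rfl
  have hσ : ∀ {k k' : Fin N}, k < k' → l (σ k) < l (σ k') := fun h => σ.strictMono h
  let f : ℕ → ℝ := fun k => if k = 0 then 0 else if h : k < N then l (σ ⟨k, h⟩) else M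
  have hf0 : ∀ k, 0 ≤ f k := by
    intro k; simp only [f]; split_ifs
    · exact le_rfl
    · exact hl _
    · exact (hl _).trans ((hlr _).le.trans (hr (Classical.arbitrary ι)))
  have hf : Monotone f := by
    refine monotone_nat_of_le_succ fun k => ?_
    rcases Nat.eq_zero_or_pos k with rfl | hk
    · simpa [f] using hf0 1
    simp only [f, Nat.succ_ne_zero, if_false, hk.ne']
    split_ifs
    · exact (hσ (Fin.mk_lt_mk.2 (Nat.lt_succ_self k))).le
    · exact (hlr _).le.trans (hr _)
    · omega
    · exact le_rfl
  refine ⟨fun k => f k, σ.toEquiv, fun k k' h => hf h, by simp [f], ?_, fun p => ?_⟩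
  · simp [f, show N ≠ 0 from Fintype.card_ne_zero]
  obtain ⟨k, rfl⟩ := σ.surjective p
  rw [show σ.toEquiv.symm (σ k) = k from σ.symm_apply_apply k]
  refine Ioo_subset_Ioo ?_ ?_
  · show f k ≤ l (σ k)
    by_cases hk : (k : ℕ) = 0
    · simpa [f, hk] using hl _
    · simp [f, hk, k.isLt]
  · show r (σ k) ≤ f (k + 1)
    by_cases hk : (k : ℕ) + 1 < N
    · simpa [f, hk] using hsep _ _ (hσ (show k < ⟨k + 1, hk⟩ from Nat.lt_succ_self k))
    · simpa [f, hk] using hr _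

/-- The shares of one group of players, with the constraints a connected division imposes on them.
Segment player `j` gets value `a j` from its segment and the fractions `w₁ j`, `w₂ j` of its two
compensation cells (each worth `1/3`); separation player `t` gets the fraction `y t` of its cell.
A segment player with parts of both compensation cells covers the separation cell `τ j` between
them ("bridge"); one with parts of its segment and of a compensation cell covers the first
separation cell `t₀` ("span"). -/
structure SharesFeasible {ι κ : Type*} (a w₁ w₂ : ι → ℝ) (y : κ → ℝ) (τ : ι → κ) (t₀ : κ) :
    Prop where
  seg_nonneg : ∀ j, 0 ≤ a j
  seg_le : ∀ j, a j ≤ 1 / 3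
  left_nonneg : ∀ j, 0 ≤ w₁ j
  left_le : ∀ j, w₁ j ≤ 1
  right_nonneg : ∀ j, 0 ≤ w₂ j
  right_le : ∀ j, w₂ j ≤ 1
  sep_le : ∀ t, y t ≤ 1
  ne_base : ∀ j, τ j ≠ t₀
  injOn_bridge : Set.InjOn τ {j | 0 < w₁ j ∧ 0 < w₂ j}
  sep_bridge : ∀ j, 0 < w₁ j → 0 < w₂ j → y (τ j) = 0
  subsingleton_span : {j | 0 < a j ∧ 0 < w₁ j + w₂ j}.Subsingleton
  sep_span : ∀ j, 0 < a j → 0 < w₁ j + w₂ j → y t₀ = 0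

namespace SharesFeasible

open Finset

variable {ι κ : Type*} {a w₁ w₂ : ι → ℝ} {y : κ → ℝ} {τ : ι → κ} {t₀ : κ}

lemma value_le (h : SharesFeasible a w₁ w₂ y τ t₀) (j : ι) :
    a j + (w₁ j + w₂ j) / 3 ≤ 1 / 3 + (if 0 < w₁ j ∧ 0 < w₂ j then 1 / 3 else 0)
      + (if 0 < a j ∧ 0 < w₁ j + w₂ j then 2 / 3 else 0) := by
  have := h.seg_nonneg j; have := h.seg_le j; have := h.left_nonneg j; have := h.left_le j
  have := h.right_nonneg j; have := h.right_le j
  by_cases hS : 0 < a j ∧ 0 < w₁ j + w₂ j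
  · split_ifs <;> linarith
  have hspan : a j = 0 ∨ w₁ j + w₂ j = 0 := by
    by_contra! h'
    exact hS ⟨(h.seg_nonneg j).lt_of_ne' h'.1,
      (add_nonneg (h.left_nonneg j) (h.right_nonneg j)).lt_of_ne' h'.2⟩
  by_cases hT : 0 < w₁ j ∧ 0 < w₂ j
  · split_ifs; rcases hspan with h' | h' <;> linarith
  have hw : w₁ j = 0 ∨ w₂ j = 0 := by
    by_contra! h'
    exact hT ⟨(h.left_nonneg j).lt_of_ne' h'.1, (h.right_nonneg j).lt_of_ne' h'.2⟩
  rw [if_neg hT, if_neg hS]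
  rcases hspan with h' | h' <;> rcases hw with h'' | h'' <;> linarith

variable [Fintype ι]

lemma sum_value_le (h : SharesFeasible a w₁ w₂ y τ t₀) :
    ∑ j, (a j + (w₁ j + w₂ j) / 3) ≤ Fintype.card ι / 3 + #{j | 0 < w₁ j ∧ 0 < w₂ j} / 3
      + 2 * #{j | 0 < a j ∧ 0 < w₁ j + w₂ j} / 3 := by
  refine (sum_le_sum fun j _ => h.value_le j).trans_eq ?_
  simp only [sum_add_distrib, sum_ite, sum_const_zero, add_zero, sum_const, nsmul_eq_mul,
    card_univ]
  ring

variable [Fintype κ] [DecidableEq κ]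

lemma sum_sep_le (h : SharesFeasible a w₁ w₂ y τ t₀) :
    ∑ t, y t ≤
      Fintype.card κ - #{j | 0 < w₁ j ∧ 0 < w₂ j} - #{j | 0 < a j ∧ 0 < w₁ j + w₂ j} := by
  set T := ({j | 0 < w₁ j ∧ 0 < w₂ j} : Finset ι)
  set S := ({j | 0 < a j ∧ 0 < w₁ j + w₂ j} : Finset ι)
  set B := T.image τ ∪ S.image fun _ => t₀
  have hB : #B = #T + #S := by
    rw [card_union_of_disjoint, card_image_of_injOn, card_image_of_injOn]
    · intro j hj j' hj' _
      exact h.subsingleton_span (by simpa [S] using hj) (by simpa [S] using hj')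
    · intro j hj j' hj' hjj
      exact h.injOn_bridge (by simpa [T] using hj) (by simpa [T] using hj') hjj
    · simp only [Finset.disjoint_left, Finset.mem_image]
      rintro _ ⟨j, -, rfl⟩ ⟨_, -, h'⟩
      exact h.ne_base j h'.symm
  have hblocked : ∀ t, y t ≤ 1 - if t ∈ B then 1 else 0 := by
    intro t
    split_ifs with ht
    · simp only [B, Finset.mem_union, Finset.mem_image] at ht
      obtain ⟨j, hj, rfl⟩ | ⟨j, hj, rfl⟩ := ht
      · simp only [T, mem_filter, Finset.mem_univ, true_and] at hj
        simp [h.sep_bridge j hj.1 hj.2]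
      · simp only [S, mem_filter, Finset.mem_univ, true_and] at hj
        simp [h.sep_span j hj.1 hj.2]
    · simpa using h.sep_le t
  calc ∑ t, y t ≤ ∑ t, (1 - if t ∈ B then (1 : ℝ) else 0) := sum_le_sum fun t _ => hblocked t
    _ = _ := by
      simp only [sum_sub_distrib, sum_const, card_univ, nsmul_eq_mul, mul_one, sum_ite_mem,
        Finset.univ_inter, hB, Nat.cast_add]
      ring

theorem sum_le (h : SharesFeasible a w₁ w₂ y τ t₀) :
    ∑ j, (a j + (w₁ j + w₂ j) / 3) + ∑ t, y t ≤ Fintype.card ι / 3 + Fintype.card κ := by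
  linarith [h.sum_value_le, h.sum_sep_le]

theorem sum_lt (h : SharesFeasible a w₁ w₂ y τ t₀) (ha : ∀ j, a j < 1 / 3)
    (hw : ∑ j, (w₁ j + w₂ j) < Fintype.card ι) :
    ∑ j, (a j + (w₁ j + w₂ j) / 3) + ∑ t, y t < Fintype.card ι / 3 + Fintype.card κ := by
  have hvalue := h.sum_value_le
  have hsep := h.sum_sep_le
  by_cases hTS : #{j | 0 < w₁ j ∧ 0 < w₂ j} = 0 ∧ #{j | 0 < a j ∧ 0 < w₁ j + w₂ j} = 0
  swap
  · have : (0 : ℝ) < #{j | 0 < w₁ j ∧ 0 < w₂ j} + #{j | 0 < a j ∧ 0 < w₁ j + w₂ j} := by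
      norm_cast; omega
    linarith
  obtain ⟨hT, hS⟩ := hTS
  suffices ∑ j, (a j + (w₁ j + w₂ j) / 3) < Fintype.card ι / 3 by
    rw [hT, hS, Nat.cast_zero, sub_zero, sub_zero] at hsep
    linarith
  replace hT j : ¬(0 < w₁ j ∧ 0 < w₂ j) :=
    filter_eq_empty_iff.1 (card_eq_zero.1 hT) (Finset.mem_univ j)
  replace hS j : ¬(0 < a j ∧ 0 < w₁ j + w₂ j) :=
    filter_eq_empty_iff.1 (card_eq_zero.1 hS) (Finset.mem_univ j)
  by_cases hpos : ∃ j, 0 < a j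
  · obtain ⟨j, hj⟩ := hpos
    have hwj : w₁ j + w₂ j ≤ 0 := not_lt.1 fun hw' => hS j ⟨hj, hw'⟩
    calc ∑ j, (a j + (w₁ j + w₂ j) / 3) < ∑ _j : ι, (1 / 3 : ℝ) := by
          refine sum_lt_sum (fun j _ => ?_) ⟨j, Finset.mem_univ j, by linarith [ha j]⟩
          simpa [hT j, hS j] using h.value_le j
      _ = Fintype.card ι / 3 := by simp only [sum_const, card_univ, nsmul_eq_mul]; ring
  · push Not at hpos
    have ha0 : ∀ j, a j = 0 := fun j => le_antisymm (hpos j) (h.seg_nonneg j)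
    simp only [ha0, zero_add, ← sum_div]
    linarith

end SharesFeasible

/-- The segment `{b, …, e}` as the interval `(b - 1, e)` of the cake. -/
def segIoo (s : ℕ × ℕ) : Set ℝ := Ioo ((s.1 : ℝ) - 1) s.2

/-- The unit cell `(C_i + k, C_i + k + 1)`: separation player `q_i^{t+1}` values the cell `2t`,
and the compensation cells of the segment players are the odd ones. -/
noncomputable def cell (n m : ℕ) (L : Fin n → ℕ) (i : Fin n) (k : ℕ) : Set ℝ :=
  Ioo (Coff n L m i + k) (Coff n L m i + k + 1)

/-- Segment player `j` of a set of size `l` values the cells `2 * oddIdx l j + 1` and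
`2 * oddIdx l j + 3`; this closed form covers the three cases of `mcDensity` (for `j = 0`,
truncated subtraction gives `0`). -/
def oddIdx (l j : ℕ) : ℕ := min (j - 1) (l - 3)

noncomputable def segShare (s : ℕ × ℕ) (S : Set ℝ) : ℝ :=
  1 / 3 / (s.2 - ((s.1 : ℝ) - 1)) * volume.real (S ∩ segIoo s)

def zoneStart {n : ℕ} (L : Fin n → ℕ) (i : Fin n) : ℕ :=
  ∑ i' ∈ Finset.univ.filter (· < i), 2 * (L i' - 1)

section Reduction

variable {n m : ℕ} {L : Fin n → ℕ} {A : (i : Fin n) → Fin (L i) → ℕ × ℕ}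

lemma Coff_eq (hL : ∀ i, 1 ≤ L i) (i : Fin n) : Coff n L m i = m + zoneStart L i := by
  simp only [Coff, zoneStart, Nat.cast_sum, Finset.mul_sum]
  congr 1
  refine Finset.sum_congr rfl fun i' _ => ?_
  push_cast [Nat.cast_sub (hL i')]
  ring

lemma le_Coff (hL : ∀ i, 1 ≤ L i) (i : Fin n) : (m : ℝ) ≤ Coff n L m i := by
  rw [Coff_eq hL]; simp

lemma cell_nonempty (i : Fin n) (k : ℕ) : (cell n m L i k).Nonempty :=
  nonempty_Ioo.2 (by linarith)

lemma cell_disjoint (i : Fin n) {k k' : ℕ} (h : k < k') :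
    Disjoint (cell n m L i k) (cell n m L i k') := by
  have : (k : ℝ) + 1 ≤ k' := by exact_mod_cast h
  exact Set.disjoint_left.2 fun x hx hx' => by linarith [hx.2, hx'.1]

lemma measureReal_cell (i : Fin n) (k : ℕ) : volume.real (cell n m L i k) = 1 := by
  rw [cell, Real.volume_real_Ioo_of_le (by linarith)]; ring

lemma measureReal_inter_cell_le (S : Set ℝ) (i : Fin n) (k : ℕ) :
    volume.real (S ∩ cell n m L i k) ≤ 1 :=
  (measureReal_inter_Ioo_le S (by linarith)).trans_eq (by ring)

lemma cell_subset_of_measureReal_pos {S : Set ℝ} (hS : S.OrdConnected) {x : ℝ} (hx : x ∈ S)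
    {i : Fin n} {k k' : ℕ} (hxk : x ≤ Coff n L m i + k) (hkk' : k < k')
    (h : 0 < volume.real (S ∩ cell n m L i k')) : cell n m L i k ⊆ S := by
  obtain ⟨y, hyS, hy⟩ := nonempty_of_measureReal_ne_zero h.ne'
  have : (k : ℝ) + 1 ≤ k' := by exact_mod_cast hkk'
  exact fun z hz => hS.out hx hyS ⟨by linarith [hz.1], by linarith [hz.2, hy.1]⟩

lemma withDensity_unif_cell_apply (c : ℝ) (S : Set ℝ) (i : Fin n) (k : ℕ) :
    volume.withDensity (unif (Coff n L m i + k) (Coff n L m i + k + 1) c) S =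
      ENNReal.ofReal c * volume (S ∩ cell n m L i k) := by
  rw [withDensity_unif_apply, cell]; norm_num

lemma mcDensity_inl {i : Fin n} (hL : 3 ≤ L i) (j : Fin (L i)) :
    mcDensity n m L A (.inl ⟨i, j⟩) = unif ((A i j).1 - 1) (A i j).2 (1 / 3) +
      (unif (Coff n L m i + (2 * oddIdx (L i) j + 1 : ℕ))
          (Coff n L m i + (2 * oddIdx (L i) j + 1 : ℕ) + 1) (1 / 3) +
        unif (Coff n L m i + (2 * oddIdx (L i) j + 3 : ℕ))
          (Coff n L m i + (2 * oddIdx (L i) j + 3 : ℕ) + 1) (1 / 3)) := by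
  funext x
  simp only [mcDensity, Pi.add_apply]
  congr 1
  split_ifs with h0 hl
  · have : oddIdx (L i) j = 0 := by simp [oddIdx, h0]
    simp only [this]; norm_num; ring_nf
  · have : oddIdx (L i) j = L i - 3 := by simp only [oddIdx]; omega
    simp only [this]; push_cast [Nat.cast_sub hL]; ring_nf
  · have : oddIdx (L i) j = j - 1 := by simp only [oddIdx]; omega
    simp only [this]; push_cast [Nat.cast_sub (Nat.one_le_iff_ne_zero.2 h0)]; ring_nf

lemma segShare_nonneg {s : ℕ × ℕ} (hs : s.1 ≤ s.2) (S : Set ℝ) : 0 ≤ segShare s S := by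
  have : (s.1 : ℝ) ≤ s.2 := by exact_mod_cast hs
  have : 0 < (s.2 : ℝ) - (s.1 - 1) := by linarith
  unfold segShare
  positivity

lemma segShare_le {s : ℕ × ℕ} (hs : s.1 ≤ s.2) (S : Set ℝ) : segShare s S ≤ 1 / 3 := by
  have : (s.1 : ℝ) ≤ s.2 := by exact_mod_cast hs
  have : 0 < (s.2 : ℝ) - (s.1 - 1) := by linarith
  calc segShare s S ≤ 1 / 3 / (s.2 - ((s.1 : ℝ) - 1)) * (s.2 - (s.1 - 1)) := by
        unfold segShare segIoo
        gcongr
        exact measureReal_inter_Ioo_le S (by linarith)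
    _ = 1 / 3 := by field_simp

lemma segShare_segIoo {s : ℕ × ℕ} (hs : s.1 ≤ s.2) : segShare s (segIoo s) = 1 / 3 := by
  have : (s.1 : ℝ) ≤ s.2 := by exact_mod_cast hs
  have : (s.2 : ℝ) - (s.1 - 1) ≠ 0 := by linarith
  rw [segShare, inter_self, segIoo, Real.volume_real_Ioo_of_le (by linarith)]
  field_simp

lemma segIoo_subset_of_segShare_eq {s : ℕ × ℕ} (hs : s.1 ≤ s.2) {S : Set ℝ}
    (hS : S.OrdConnected) (h : segShare s S = 1 / 3) : segIoo s ⊆ S := by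
  have : (s.1 : ℝ) ≤ s.2 := by exact_mod_cast hs
  have : (s.2 : ℝ) - (s.1 - 1) ≠ 0 := by linarith
  refine hS.Ioo_subset_of_le_measureReal ?_
  rw [segShare, segIoo] at h
  field_simp at h
  linarith

lemma mcMeas_inl_apply {i : Fin n} (hL : 3 ≤ L i) (j : Fin (L i)) (hA : (A i j).1 ≤ (A i j).2)
    (S : Set ℝ) :
    mcMeas n m L A (.inl ⟨i, j⟩) S = ENNReal.ofReal (segShare (A i j) S +
      (volume.real (S ∩ cell n m L i (2 * oddIdx (L i) j + 1)) +
        volume.real (S ∩ cell n m L i (2 * oddIdx (L i) j + 3))) / 3) := by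
  rw [mcMeas, mcDensity_inl hL, withDensity_add_left (measurable_unif _ _ _),
    withDensity_add_left (measurable_unif _ _ _), Measure.add_apply, Measure.add_apply,
    withDensity_unif_apply, withDensity_unif_cell_apply, withDensity_unif_cell_apply, add_div,
    ENNReal.ofReal_add (segShare_nonneg hA S) (by positivity),
    ENNReal.ofReal_add (by positivity) (by positivity), segShare, segIoo, cell, cell,
    div_eq_mul_one_div (volume.real _), mul_comm (volume.real _),
    ofReal_mul_measureReal_inter_Ioo, div_eq_mul_one_div (volume.real _),
    mul_comm (volume.real _), ofReal_mul_measureReal_inter_Ioo, ofReal_mul_measureReal_inter_Ioo]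

lemma mcMeas_inr_apply (i : Fin n) (t : Fin (L i - 1)) (S : Set ℝ) :
    mcMeas n m L A (.inr ⟨i, t⟩) S =
      ENNReal.ofReal (volume.real (S ∩ cell n m L i (2 * t))) := by
  rw [mcMeas, measureReal_def, cell, ENNReal.ofReal_toReal (volume_inter_Ioo_ne_top _ _ _)]
  show volume.withDensity (unif _ _ 1) S = _
  rw [withDensity_unif_apply]
  norm_num

lemma cell_bridge_subset {S : Set ℝ} (hS : S.OrdConnected) {i : Fin n} {τ : ℕ}
    (h₁ : 0 < volume.real (S ∩ cell n m L i (2 * τ + 1)))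
    (h₂ : 0 < volume.real (S ∩ cell n m L i (2 * τ + 3))) : cell n m L i (2 * (τ + 1)) ⊆ S := by
  obtain ⟨x, hxS, -, hx⟩ := nonempty_of_measureReal_ne_zero h₁.ne'
  exact cell_subset_of_measureReal_pos hS hxS (by push_cast at hx ⊢; linarith) (by omega) h₂

lemma cell_zero_subset {S : Set ℝ} (hS : S.OrdConnected) (hL : ∀ i, 1 ≤ L i) {i : Fin n}
    {s : ℕ × ℕ} (hs : s.2 ≤ m) (ha : 0 < segShare s S) {τ : ℕ}
    (hw : 0 < volume.real (S ∩ cell n m L i (2 * τ + 1)) +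
      volume.real (S ∩ cell n m L i (2 * τ + 3))) : cell n m L i 0 ⊆ S := by
  have hv : volume.real (S ∩ segIoo s) ≠ 0 := fun h0 => by simp [segShare, h0] at ha
  obtain ⟨x, hxS, -, hx⟩ := nonempty_of_measureReal_ne_zero hv
  have hxC : x ≤ Coff n L m i + (0 : ℕ) := by
    have : (s.2 : ℝ) ≤ m := by exact_mod_cast hs
    linarith [le_Coff (m := m) hL i]
  by_cases h : 0 < volume.real (S ∩ cell n m L i (2 * τ + 1))
  · exact cell_subset_of_measureReal_pos hS hxS hxC (by omega) h
  · exact cell_subset_of_measureReal_pos hS hxS hxC (by omega : 0 < 2 * τ + 3) (by linarith)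

section Forward

variable {J : MCPlayer n L → Set ℝ}

theorem sharesFeasible_of_pairwise_disjoint (hL : ∀ i, 3 ≤ L i)
    (hseg : ∀ i j, (A i j).1 ≤ (A i j).2 ∧ (A i j).2 ≤ m) (hJ : Pairwise (Disjoint on J))
    (hJc : ∀ p, (J p).OrdConnected) (i : Fin n) :
    SharesFeasible (fun j => segShare (A i j) (J (.inl ⟨i, j⟩)))
      (fun j => volume.real (J (.inl ⟨i, j⟩) ∩ cell n m L i (2 * oddIdx (L i) j + 1)))
      (fun j => volume.real (J (.inl ⟨i, j⟩) ∩ cell n m L i (2 * oddIdx (L i) j + 3)))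
      (fun t => volume.real (J (.inr ⟨i, t⟩) ∩ cell n m L i (2 * t)))
      (fun j => ⟨oddIdx (L i) j + 1, by have := hL i; simp only [oddIdx]; omega⟩)
      ⟨0, by have := hL i; omega⟩ := by
  have hL1 : ∀ i, 1 ≤ L i := fun i => (hL i).trans' (by norm_num)
  exact {
    seg_nonneg := fun j => segShare_nonneg (hseg i j).1 _
    seg_le := fun j => segShare_le (hseg i j).1 _
    left_nonneg := fun _ => measureReal_nonneg
    left_le := fun _ => measureReal_inter_cell_le _ _ _
    right_nonneg := fun _ => measureReal_nonneg
    right_le := fun _ => measureReal_inter_cell_le _ _ _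
    sep_le := fun _ => measureReal_inter_cell_le _ _ _
    ne_base := fun j h => by simp at h
    injOn_bridge := by
      rintro j ⟨h₁, h₂⟩ j' ⟨h₁', h₂'⟩ hjj
      have hidx : oddIdx (L i) j = oddIdx (L i) j' := by simpa using hjj
      obtain ⟨z, hz⟩ := cell_nonempty (m := m) i (2 * (oddIdx (L i) j + 1))
      simpa using hJ.eq_of_mem_of_disjoint (cell_bridge_subset (hJc _) h₁ h₂ hz)
        (cell_bridge_subset (hJc _) h₁' h₂' (hidx ▸ hz))
    sep_bridge := fun _ h₁ h₂ =>
      measureReal_inter_eq_zero_of_subset hJ (by simp) (cell_bridge_subset (hJc _) h₁ h₂)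
    subsingleton_span := by
      rintro j ⟨ha, hw⟩ j' ⟨ha', hw'⟩
      obtain ⟨z, hz⟩ := cell_nonempty (m := m) i 0
      simpa using hJ.eq_of_mem_of_disjoint (cell_zero_subset (hJc _) hL1 (hseg i j).2 ha hw hz)
        (cell_zero_subset (hJc _) hL1 (hseg i j').2 ha' hw' hz)
    sep_span := fun j ha hw => measureReal_inter_eq_zero_of_subset hJ (by simp)
      (cell_zero_subset (hJc _) hL1 (hseg i j).2 ha hw) }

lemma sum_oddCellShares_le (hL : ∀ i, 3 ≤ L i) (hJ : Pairwise (Disjoint on J))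
    (hJc : ∀ p, (J p).OrdConnected) (i : Fin n) :
    ∑ j, (volume.real (J (.inl ⟨i, j⟩) ∩ cell n m L i (2 * oddIdx (L i) j + 1)) +
      volume.real (J (.inl ⟨i, j⟩) ∩ cell n m L i (2 * oddIdx (L i) j + 3))) ≤ L i - 1 := by
  set O := ⋃ t : Fin (L i - 1), cell n m L i (2 * t + 1)
  have hOm : MeasurableSet O := MeasurableSet.iUnion fun _ => measurableSet_Ioo
  have hO : volume O ≠ ⊤ := ne_top_of_le_ne_top
    (ENNReal.sum_ne_top.2 fun _ _ => measure_Ioo_lt_top.ne) (measure_iUnion_fintype_le _ _)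
  have := isFiniteMeasure_restrict.2 hO
  have hsub : ∀ t (ht : t < L i - 1), cell n m L i (2 * t + 1) ⊆ O :=
    fun t ht => subset_iUnion (fun t : Fin (L i - 1) => cell n m L i (2 * t + 1)) ⟨t, ht⟩
  have hj : ∀ j, volume.real (J (.inl ⟨i, j⟩) ∩ cell n m L i (2 * oddIdx (L i) j + 1)) +
      volume.real (J (.inl ⟨i, j⟩) ∩ cell n m L i (2 * oddIdx (L i) j + 3)) ≤
      (volume.restrict O).real (J (.inl ⟨i, j⟩)) := by
    intro j
    have hτ : oddIdx (L i) j + 1 < L i - 1 := by have := hL i; simp only [oddIdx]; omega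
    rw [measureReal_restrict_apply' hOm, ← measureReal_union
      (((cell_disjoint i (by omega : 2 * oddIdx (L i) j + 1 < 2 * oddIdx (L i) j + 3)).mono
        inter_subset_right inter_subset_right)) ((hJc _).measurableSet.inter measurableSet_Ioo)
      (volume_inter_Ioo_ne_top _ _ _) (volume_inter_Ioo_ne_top _ _ _),
      ← inter_union_distrib_left]
    refine measureReal_mono (inter_subset_inter_right _ (union_subset (hsub _ (by omega)) ?_))
      (measure_ne_top_of_subset inter_subset_right hO)
    rw [show 2 * oddIdx (L i) j + 3 = 2 * (oddIdx (L i) j + 1) + 1 by ring]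
    exact hsub _ hτ
  calc _ ≤ ∑ j, (volume.restrict O).real (J (.inl ⟨i, j⟩)) := Finset.sum_le_sum fun j _ => hj j
    _ ≤ (volume.restrict O).real univ :=
        sum_measureReal_le_measureReal_univ (fun _ _ => (hJc _).measurableSet)
          fun j _ j' _ hne => hJ (by simpa using hne)
    _ = volume.real O := measureReal_restrict_apply_univ O
    _ ≤ ∑ t : Fin (L i - 1), volume.real (cell n m L i (2 * t + 1)) :=
        measureReal_iUnion_fintype_le _
    _ = L i - 1 := by
        simp [measureReal_cell, Nat.cast_sub ((hL i).trans' (by norm_num) : 1 ≤ L i)]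

variable (m A J) in
noncomputable def groupWelfare (i : Fin n) : ℝ :=
  ∑ j, (mcMeas n m L A (.inl ⟨i, j⟩) (J (.inl ⟨i, j⟩))).toReal +
    ∑ t, (mcMeas n m L A (.inr ⟨i, t⟩) (J (.inr ⟨i, t⟩))).toReal

lemma groupWelfare_eq (hL : ∀ i, 3 ≤ L i) (hseg : ∀ i j, (A i j).1 ≤ (A i j).2) (i : Fin n) :
    groupWelfare m A J i =
      ∑ j, (segShare (A i j) (J (.inl ⟨i, j⟩)) +
        (volume.real (J (.inl ⟨i, j⟩) ∩ cell n m L i (2 * oddIdx (L i) j + 1)) +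
          volume.real (J (.inl ⟨i, j⟩) ∩ cell n m L i (2 * oddIdx (L i) j + 3))) / 3) +
      ∑ t, volume.real (J (.inr ⟨i, t⟩) ∩ cell n m L i (2 * t)) := by
  simp only [groupWelfare, mcMeas_inl_apply (hL i) _ (hseg i _), mcMeas_inr_apply,
    ENNReal.toReal_ofReal measureReal_nonneg]
  congr 1
  refine Finset.sum_congr rfl fun j _ => ENNReal.toReal_ofReal ?_
  have := segShare_nonneg (hseg i j) (J (.inl ⟨i, j⟩))
  positivity

lemma groupWelfare_le (hL : ∀ i, 3 ≤ L i) (hseg : ∀ i j, (A i j).1 ≤ (A i j).2 ∧ (A i j).2 ≤ m)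
    (hJ : Pairwise (Disjoint on J)) (hJc : ∀ p, (J p).OrdConnected) (i : Fin n) :
    groupWelfare m A J i ≤ 4 / 3 * L i - 1 := by
  rw [groupWelfare_eq hL (fun i j => (hseg i j).1)]
  refine ((sharesFeasible_of_pairwise_disjoint hL hseg hJ hJc i).sum_le).trans_eq ?_
  simp only [Fintype.card_fin, Nat.cast_sub ((hL i).trans' (by norm_num) : 1 ≤ L i), Nat.cast_one]
  ring

lemma groupWelfare_lt (hL : ∀ i, 3 ≤ L i) (hseg : ∀ i j, (A i j).1 ≤ (A i j).2 ∧ (A i j).2 ≤ m)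
    (hJ : Pairwise (Disjoint on J)) (hJc : ∀ p, (J p).OrdConnected) (i : Fin n)
    (h : ∀ j, segShare (A i j) (J (.inl ⟨i, j⟩)) < 1 / 3) :
    groupWelfare m A J i < 4 / 3 * L i - 1 := by
  rw [groupWelfare_eq hL (fun i j => (hseg i j).1)]
  refine ((sharesFeasible_of_pairwise_disjoint hL hseg hJ hJc i).sum_lt h ?_).trans_eq ?_
  · simpa using (sum_oddCellShares_le hL hJ hJc i).trans_lt (sub_one_lt _)
  simp only [Fintype.card_fin, Nat.cast_sub ((hL i).trans' (by norm_num) : 1 ≤ L i), Nat.cast_one]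
  ring

theorem exists_disjoint_choice_of_le_welfare (hL : ∀ i, 3 ≤ L i)
    (hseg : ∀ i j, (A i j).1 ≤ (A i j).2 ∧ (A i j).2 ≤ m) (hJ : Pairwise (Disjoint on J))
    (hJc : ∀ p, (J p).OrdConnected)
    (hwel : ENNReal.ofReal ((4 / 3) * (∑ i, (L i : ℝ)) - n) ≤ ∑ p, mcMeas n m L A p (J p)) :
    ∃ ch : (i : Fin n) → Fin (L i), ∀ i i', i ≠ i' →
      Disjoint (Finset.Icc (A i (ch i)).1 (A i (ch i)).2)
        (Finset.Icc (A i' (ch i')).1 (A i' (ch i')).2) := by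
  have hfin : ∀ p, mcMeas n m L A p (J p) ≠ ⊤ := by
    rintro (⟨i, j⟩ | ⟨i, t⟩)
    · rw [mcMeas_inl_apply (hL i) j (hseg i j).1]; exact ENNReal.ofReal_ne_top
    · rw [mcMeas_inr_apply]; exact ENNReal.ofReal_ne_top
  have hwel' : ∑ i, (4 / 3 * (L i : ℝ) - 1) ≤ ∑ i, groupWelfare m A J i := by
    rw [ENNReal.ofReal_le_iff_le_toReal (ENNReal.sum_ne_top.2 fun p _ => hfin p),
      ENNReal.toReal_sum fun p _ => hfin p, Fintype.sum_sum_type, Fintype.sum_sigma,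
      Fintype.sum_sigma, ← Finset.sum_add_distrib] at hwel
    simpa [groupWelfare, Finset.sum_sub_distrib, Finset.mul_sum] using hwel
  have heq := (Finset.sum_eq_sum_iff_of_le fun i _ => groupWelfare_le hL hseg hJ hJc i).1
    (le_antisymm (Finset.sum_le_sum fun i _ => groupWelfare_le hL hseg hJ hJc i) hwel')
  have hfull : ∀ i, ∃ j, segShare (A i j) (J (.inl ⟨i, j⟩)) = 1 / 3 := by
    intro i
    by_contra! h
    exact (groupWelfare_lt hL hseg hJ hJc i fun j =>
      (segShare_le (hseg i j).1 _).lt_of_ne (h j)).ne (heq i (Finset.mem_univ i))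
  choose ch hch using hfull
  refine ⟨ch, fun i i' hii' => Finset.disjoint_left.2 fun x hx hx' => hii' ?_⟩
  have hmem : ∀ i, x ∈ Finset.Icc (A i (ch i)).1 (A i (ch i)).2 →
      (x : ℝ) - 1 / 2 ∈ J (.inl ⟨i, ch i⟩) := by
    intro i hx
    rw [Finset.mem_Icc] at hx
    have h₁ : ((A i (ch i)).1 : ℝ) ≤ x := by exact_mod_cast hx.1
    have h₂ : (x : ℝ) ≤ (A i (ch i)).2 := by exact_mod_cast hx.2
    exact segIoo_subset_of_segShare_eq (hseg i (ch i)).1 (hJc _) (hch i)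
      ⟨by linarith, by linarith⟩
  exact congrArg Sigma.fst (Sum.inl_injective (hJ.eq_of_mem_of_disjoint (hmem i hx) (hmem i' hx')))

end Forward

section Backward

lemma zoneStart_add_le {i : Fin n} {s : Finset (Fin n)} (hs : ∀ i', i' ≤ i → i' ∈ s) :
    zoneStart L i + 2 * (L i - 1) ≤ ∑ i' ∈ s, 2 * (L i' - 1) := by
  rw [zoneStart, add_comm, ← Finset.sum_insert (f := fun i' => 2 * (L i' - 1)) (by simp)]
  refine Finset.sum_le_sum_of_subset fun i' hi' => hs i' ?_
  rw [Finset.mem_insert, Finset.mem_filter] at hi'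
  rcases hi' with rfl | h
  exacts [le_rfl, h.2.le]

lemma zoneStart_separated {i i' : Fin n} (h : i ≠ i') :
    zoneStart L i + 2 * (L i - 1) ≤ zoneStart L i' ∨
      zoneStart L i' + 2 * (L i' - 1) ≤ zoneStart L i := by
  rcases h.lt_or_gt with h | h
  · exact .inl (zoneStart_add_le fun i'' hi'' => by simp [hi''.trans_lt h])
  · exact .inr (zoneStart_add_le fun i'' hi'' => by simp [hi''.trans_lt h])

def skipIdx (c j : ℕ) : ℕ := if j < c then j else j - 1

lemma skipIdx_eq_or {l c j : ℕ} (hl : 3 ≤ l) (hj : j < l) (hc : c < l) :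
    skipIdx c j = oddIdx l j ∨ skipIdx c j = oddIdx l j + 1 := by
  unfold skipIdx oddIdx; split_ifs <;> omega

lemma skipIdx_lt {l c j : ℕ} (hj : j < l) (hc : c < l) (hjc : j ≠ c) : skipIdx c j < l - 1 := by
  unfold skipIdx; split_ifs <;> omega

variable (m A) in
/-- The endpoints of the piece planned for each player: the chosen segment player of group `i`
takes its segment, the other segment players of the group take the odd cells of the group in
order, and separation player `t` takes the even cell `2t`. -/
def plannedPiece (ch : (i : Fin n) → Fin (L i)) : MCPlayer n L → ℕ × ℕ
  | .inl ⟨i, j⟩ => if j = ch i then ((A i j).1 - 1, (A i j).2) else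
      (m + zoneStart L i + (2 * skipIdx (ch i) j + 1),
        m + zoneStart L i + (2 * skipIdx (ch i) j + 1) + 1)
  | .inr ⟨i, t⟩ => (m + zoneStart L i + 2 * t, m + zoneStart L i + 2 * t + 1)

lemma plannedPiece_fst_lt_snd (hseg : ∀ i j, 1 ≤ (A i j).1 ∧ (A i j).1 ≤ (A i j).2)
    (ch : (i : Fin n) → Fin (L i)) (p : MCPlayer n L) :
    (plannedPiece m A ch p).1 < (plannedPiece m A ch p).2 := by
  rcases p with ⟨i, j⟩ | ⟨i, t⟩ <;> simp only [plannedPiece]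
  · have := hseg i j; split_ifs <;> dsimp only <;> omega
  · omega

lemma plannedPiece_snd_le (hseg : ∀ i j, (A i j).2 ≤ m) (ch : (i : Fin n) → Fin (L i))
    (p : MCPlayer n L) : (plannedPiece m A ch p).2 ≤ m + ∑ i, 2 * (L i - 1) := by
  rcases p with ⟨i, j⟩ | ⟨i, t⟩ <;> simp only [plannedPiece] <;>
    have := zoneStart_add_le (L := L) (i := i) (s := Finset.univ) fun _ _ => Finset.mem_univ _
  · have := hseg i j
    split_ifs with h
    · dsimp only; omega
    have := skipIdx_lt j.isLt (ch i).isLt (Fin.val_ne_of_ne h)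
    dsimp only; omega
  · have := t.isLt
    omega

lemma plannedPiece_inl_inl_disjoint
    (hseg : ∀ i j, 1 ≤ (A i j).1 ∧ (A i j).1 ≤ (A i j).2 ∧ (A i j).2 ≤ m)
    (ch : (i : Fin n) → Fin (L i))
    (hch : ∀ i i', i ≠ i' → Disjoint (Finset.Icc (A i (ch i)).1 (A i (ch i)).2)
      (Finset.Icc (A i' (ch i')).1 (A i' (ch i')).2))
    {i i' : Fin n} {j : Fin (L i)} {j' : Fin (L i')} (hne : (⟨i, j⟩ : Σ i, Fin (L i)) ≠ ⟨i', j'⟩) :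
    (plannedPiece m A ch (.inl ⟨i, j⟩)).2 ≤ (plannedPiece m A ch (.inl ⟨i', j'⟩)).1 ∨
      (plannedPiece m A ch (.inl ⟨i', j'⟩)).2 ≤ (plannedPiece m A ch (.inl ⟨i, j⟩)).1 := by
  have hb := hseg i j; have hb' := hseg i' j'
  simp only [plannedPiece]
  by_cases hii : i = i'
  · subst hii
    have hjj : j ≠ j' := fun h => hne (by rw [h])
    split_ifs with h₁ h₂ h₂
    · exact absurd (h₁.trans h₂.symm) hjj
    · omega
    · omega
    · have := Fin.val_ne_of_ne h₁; have := Fin.val_ne_of_ne h₂; have := Fin.val_ne_of_ne hjj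
      unfold skipIdx; split_ifs <;> omega
  · have := zoneStart_separated (L := L) hii
    split_ifs with h₁ h₂ h₂
    · subst h₁ h₂
      have := lt_or_lt_of_disjoint_Icc (hch i i' hii) hb.2.1 hb'.2.1
      omega
    · omega
    · omega
    · have := skipIdx_lt j.isLt (ch i).isLt (Fin.val_ne_of_ne h₁)
      have := skipIdx_lt j'.isLt (ch i').isLt (Fin.val_ne_of_ne h₂)
      omega

lemma plannedPiece_inl_inr_disjoint (hseg : ∀ i j, (A i j).2 ≤ m) (ch : (i : Fin n) → Fin (L i))
    (i : Fin n) (j : Fin (L i)) (i' : Fin n) (t' : Fin (L i' - 1)) :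
    (plannedPiece m A ch (.inl ⟨i, j⟩)).2 ≤ (plannedPiece m A ch (.inr ⟨i', t'⟩)).1 ∨
      (plannedPiece m A ch (.inr ⟨i', t'⟩)).2 ≤ (plannedPiece m A ch (.inl ⟨i, j⟩)).1 := by
  have := hseg i j; have := t'.isLt
  simp only [plannedPiece]
  split_ifs with h₁
  · omega
  by_cases hii : i = i'
  · subst hii; omega
  · have := zoneStart_separated (L := L) hii
    have := skipIdx_lt j.isLt (ch i).isLt (Fin.val_ne_of_ne h₁)
    omega

lemma plannedPiece_inr_inr_disjoint (ch : (i : Fin n) → Fin (L i)) {i i' : Fin n}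
    {t : Fin (L i - 1)} {t' : Fin (L i' - 1)}
    (hne : (⟨i, t⟩ : Σ i, Fin (L i - 1)) ≠ ⟨i', t'⟩) :
    (plannedPiece m A ch (.inr ⟨i, t⟩)).2 ≤ (plannedPiece m A ch (.inr ⟨i', t'⟩)).1 ∨
      (plannedPiece m A ch (.inr ⟨i', t'⟩)).2 ≤ (plannedPiece m A ch (.inr ⟨i, t⟩)).1 := by
  have := t.isLt; have := t'.isLt
  simp only [plannedPiece]
  by_cases hii : i = i'
  · subst hii
    have : (t : ℕ) ≠ t' := fun h => hne (by rw [Fin.ext h])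
    omega
  · have := zoneStart_separated (L := L) hii
    omega

lemma plannedPiece_disjoint (hseg : ∀ i j, 1 ≤ (A i j).1 ∧ (A i j).1 ≤ (A i j).2 ∧ (A i j).2 ≤ m)
    (ch : (i : Fin n) → Fin (L i))
    (hch : ∀ i i', i ≠ i' → Disjoint (Finset.Icc (A i (ch i)).1 (A i (ch i)).2)
      (Finset.Icc (A i' (ch i')).1 (A i' (ch i')).2)) {p q : MCPlayer n L} (hpq : p ≠ q) :
    (plannedPiece m A ch p).2 ≤ (plannedPiece m A ch q).1 ∨
      (plannedPiece m A ch q).2 ≤ (plannedPiece m A ch p).1 := by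
  rcases p with ⟨i, j⟩ | ⟨i, t⟩ <;> rcases q with ⟨i', j'⟩ | ⟨i', t'⟩
  · exact plannedPiece_inl_inl_disjoint hseg ch hch fun h => hpq (by rw [h])
  · exact plannedPiece_inl_inr_disjoint (fun i j => (hseg i j).2.2) ch i j i' t'
  · exact (plannedPiece_inl_inr_disjoint (fun i j => (hseg i j).2.2) ch i' j' i t).symm
  · exact plannedPiece_inr_inr_disjoint ch fun h => hpq (by rw [h])

lemma Ioo_zoneStart_eq_cell (hL : ∀ i, 1 ≤ L i) (i : Fin n) (k : ℕ) :
    Ioo (((m + zoneStart L i + k : ℕ)) : ℝ) ((m + zoneStart L i + k + 1 : ℕ) : ℝ) =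
      cell n m L i k := by
  rw [cell, Coff_eq hL]; push_cast; rfl

lemma ofReal_third_le_mcMeas_segIoo {i : Fin n} (hL : 3 ≤ L i) (j : Fin (L i))
    (hA : (A i j).1 ≤ (A i j).2) :
    ENNReal.ofReal (1 / 3) ≤ mcMeas n m L A (.inl ⟨i, j⟩) (segIoo (A i j)) := by
  rw [mcMeas_inl_apply hL j hA, segShare_segIoo hA]
  exact ENNReal.ofReal_le_ofReal (le_add_of_nonneg_right (by positivity))

lemma ofReal_third_le_mcMeas_cell {i : Fin n} (hL : 3 ≤ L i) (j : Fin (L i))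
    (hA : (A i j).1 ≤ (A i j).2) {k : ℕ}
    (hk : k = 2 * oddIdx (L i) j + 1 ∨ k = 2 * oddIdx (L i) j + 3) :
    ENNReal.ofReal (1 / 3) ≤ mcMeas n m L A (.inl ⟨i, j⟩) (cell n m L i k) := by
  rw [mcMeas_inl_apply hL j hA]
  refine ENNReal.ofReal_le_ofReal ?_
  have := segShare_nonneg hA (cell n m L i k)
  have : 1 ≤ volume.real (cell n m L i k ∩ cell n m L i (2 * oddIdx (L i) j + 1)) +
      volume.real (cell n m L i k ∩ cell n m L i (2 * oddIdx (L i) j + 3)) := by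
    rcases hk with rfl | rfl <;> simp only [inter_self, measureReal_cell]
    · exact le_add_of_nonneg_right measureReal_nonneg
    · exact le_add_of_nonneg_left measureReal_nonneg
  linarith

variable (L) in
noncomputable def target : MCPlayer n L → ℝ := Sum.elim (fun _ => 1 / 3) fun _ => 1

lemma sum_target (hL : ∀ i, 1 ≤ L i) : ∑ p, target L p = 4 / 3 * ∑ i, (L i : ℝ) - n := by
  simp only [target, Fintype.sum_sum_type, Sum.elim_inl, Sum.elim_inr, Finset.sum_const,
    Finset.card_univ, Fintype.card_sigma, Fintype.card_fin, nsmul_eq_mul, Nat.cast_sum,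
    Nat.cast_sub (hL _), Nat.cast_one, Finset.sum_sub_distrib, mul_one]
  ring

lemma ofReal_target_le_mcMeas_plannedPiece (hL : ∀ i, 3 ≤ L i)
    (hseg : ∀ i j, 1 ≤ (A i j).1 ∧ (A i j).1 ≤ (A i j).2) (ch : (i : Fin n) → Fin (L i))
    (p : MCPlayer n L) :
    ENNReal.ofReal (target L p) ≤
      mcMeas n m L A p (Ioo (plannedPiece m A ch p).1 (plannedPiece m A ch p).2) := by
  have hL1 : ∀ i, 1 ≤ L i := fun i => (hL i).trans' (by norm_num)
  rcases p with ⟨i, j⟩ | ⟨i, t⟩ <;> simp only [plannedPiece, target, Sum.elim_inl, Sum.elim_inr]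
  · split_ifs with h
    · rw [Nat.cast_sub (hseg i j).1, Nat.cast_one]
      exact ofReal_third_le_mcMeas_segIoo (hL i) j (hseg i j).2
    · rw [Ioo_zoneStart_eq_cell hL1]
      refine ofReal_third_le_mcMeas_cell (hL i) j (hseg i j).2 ?_
      rcases skipIdx_eq_or (hL i) j.isLt (ch i).isLt with h' | h' <;> rw [h'] <;> omega
  · rw [Ioo_zoneStart_eq_cell hL1, mcMeas_inr_apply, inter_self, measureReal_cell]

theorem exists_division_of_disjoint_choice (hn : 1 ≤ n) (hL : ∀ i, 3 ≤ L i)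
    (hseg : ∀ i j, 1 ≤ (A i j).1 ∧ (A i j).1 ≤ (A i j).2 ∧ (A i j).2 ≤ m)
    (ch : (i : Fin n) → Fin (L i))
    (hch : ∀ i i', i ≠ i' → Disjoint (Finset.Icc (A i (ch i)).1 (A i (ch i)).2)
      (Finset.Icc (A i' (ch i')).1 (A i' (ch i')).2)) :
    ∃ (c : Fin (Fintype.card (MCPlayer n L) + 1) → ℝ)
      (σ : Fin (Fintype.card (MCPlayer n L)) ≃ MCPlayer n L),
      Monotone c ∧ c 0 = 0 ∧ c (Fin.last _) = m + 2 * ∑ i, ((L i : ℝ) - 1) ∧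
      ENNReal.ofReal ((4 / 3) * (∑ i, (L i : ℝ)) - n) ≤
        ∑ p, mcMeas n m L A p (Ioo (c (σ.symm p).castSucc) (c (σ.symm p).succ)) := by
  have hL1 : ∀ i, 1 ≤ L i := fun i => (hL i).trans' (by norm_num)
  have : Nonempty (MCPlayer n L) := ⟨.inl ⟨⟨0, hn⟩, ⟨0, by have := hL ⟨0, hn⟩; omega⟩⟩⟩
  have hM : ((m + ∑ i, 2 * (L i - 1) : ℕ) : ℝ) = m + 2 * ∑ i, ((L i : ℝ) - 1) := by
    push_cast [Nat.cast_sub (hL1 _), Finset.mul_sum]; rfl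
  obtain ⟨c, σ, hc, hc0, hcM, hsub⟩ := exists_division_of_pairwise_disjoint
    (fun p => ((plannedPiece m A ch p).1 : ℝ)) (fun p => (plannedPiece m A ch p).2)
    (m + 2 * ∑ i, ((L i : ℝ) - 1))
    (fun p => by
      exact_mod_cast plannedPiece_fst_lt_snd (fun i j => ⟨(hseg i j).1, (hseg i j).2.1⟩) ch p)
    (fun p => Nat.cast_nonneg _)
    (fun p => hM ▸ by exact_mod_cast plannedPiece_snd_le (fun i j => (hseg i j).2.2) ch p)
    (fun p q hpq => by exact_mod_cast plannedPiece_disjoint hseg ch hch hpq)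
  refine ⟨c, σ, hc, hc0, hcM, ?_⟩
  calc ENNReal.ofReal ((4 / 3) * (∑ i, (L i : ℝ)) - n) = ∑ p, ENNReal.ofReal (target L p) := by
        rw [← ENNReal.ofReal_sum_of_nonneg (by rintro (_ | _) _ <;> norm_num [target]),
          sum_target hL1]
    _ ≤ ∑ p, mcMeas n m L A p (Ioo (plannedPiece m A ch p).1 (plannedPiece m A ch p).2) :=
        Finset.sum_le_sum fun p _ => ofReal_target_le_mcMeas_plannedPiece hL
          (fun i j => ⟨(hseg i j).1, (hseg i j).2.1⟩) ch p
    _ ≤ _ := Finset.sum_le_sum fun p _ => measure_mono (hsub p)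

end Backward

end Reduction

theorem stmt_3_general (n m : ℕ) (hn : 1 ≤ n)
    (L : Fin n → ℕ) (hL : ∀ i, 3 ≤ L i)
    (A : (i : Fin n) → Fin (L i) → ℕ × ℕ)
    (hseg : ∀ i j, 1 ≤ (A i j).1 ∧ (A i j).1 ≤ (A i j).2 ∧ (A i j).2 ≤ m) :
    (∃ (c : Fin (Fintype.card (MCPlayer n L) + 1) → ℝ)
      (σ : Fin (Fintype.card (MCPlayer n L)) ≃ MCPlayer n L),
      Monotone c ∧ c 0 = 0 ∧
      c (Fin.last _) = m + 2 * ∑ i, ((L i : ℝ) - 1) ∧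
      ENNReal.ofReal ((4 / 3) * (∑ i, (L i : ℝ)) - n) ≤
        ∑ p : MCPlayer n L,
          mcMeas n m L A p (Ioo (c (σ.symm p).castSucc) (c (σ.symm p).succ)))
    ↔ (∃ ch : (i : Fin n) → Fin (L i), ∀ i i', i ≠ i' →
        Disjoint (Finset.Icc (A i (ch i)).1 (A i (ch i)).2)
          (Finset.Icc (A i' (ch i')).1 (A i' (ch i')).2)) := by
  constructor
  · rintro ⟨c, σ, hc, -, -, hwel⟩
    exact exists_disjoint_choice_of_le_welfare hL (fun i j => (hseg i j).2)
      (hc.pairwise_disjoint_Ioo_castSucc_succ.comp_of_injective σ.symm.injective)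
      (fun _ => ordConnected_Ioo) hwel
  · rintro ⟨ch, hch⟩
    exact exists_division_of_disjoint_choice hn hL hseg ch hch

/-- correctness of the MCSP reduction, Theorem 6: the constructed
cake instance admits a connected division of utilitarian welfare at least
`B = (4/3)·Σ_i |A_i| − n` iff one can choose `n` pairwise disjoint segments,
exactly one from each `A_i`. -/
theorem stmt_3 (n m : ℕ) (hn : 1 ≤ n) (hm : 1 ≤ m)
    (L : Fin n → ℕ) (hL : ∀ i, 3 ≤ L i)
    (A : (i : Fin n) → Fin (L i) → ℕ × ℕ)
    (hseg : ∀ i j, 1 ≤ (A i j).1 ∧ (A i j).1 ≤ (A i j).2 ∧ (A i j).2 ≤ m)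
    (hdist : ∀ i, Function.Injective (A i)) :
    (∃ (c : Fin (Fintype.card (MCPlayer n L) + 1) → ℝ)
      (σ : Fin (Fintype.card (MCPlayer n L)) ≃ MCPlayer n L),
      Monotone c ∧ c 0 = 0 ∧
      c (Fin.last _) = m + 2 * ∑ i, ((L i : ℝ) - 1) ∧
      ENNReal.ofReal ((4 / 3) * (∑ i, (L i : ℝ)) - n) ≤
        ∑ p : MCPlayer n L,
          mcMeas n m L A p (Ioo (c (σ.symm p).castSucc) (c (σ.symm p).succ)))
    ↔ (∃ ch : (i : Fin n) → Fin (L i), ∀ i i', i ≠ i' →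
        Disjoint (Finset.Icc (A i (ch i)).1 (A i (ch i)).2)
          (Finset.Icc (A i' (ch i')).1 (A i' (ch i')).2)) :=
  stmt_3_general n m hn L hL A hseg
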